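/- arXiv:2503.14117 — 6 statements merged into one kernel-verified Lean document; each statement's English description precedes it below -/
import Mathlib

section
/- Let ⟨Γ₁, 𝓑₁⟩ and ⟨Γ₂, 𝓑₂⟩ be discrete spaces with 𝓑₂ = {B²_1, …, B²_m}, and let φ : Γ₁ → Γ₂ be an injective function. Then for every A₁ ⊆ Γ₁, D(A₁ | 𝓑₁) ≤ D(φ(A₁) | 𝓑₂) + D(φ^{−1}(B²_1), …, φ^{−1}(B²_m) | 𝓑₁) ≤ D(φ(A₁) | 𝓑₂) + Σ_{B ∈ 𝓑₂} D(φ^{−1}(B) | 𝓑₁), and the same inequalities hold with D replaced throughout by D_∩ (counting only intersection operations) or by D_∪ (counting only union operations). -/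
open Set Filter

section Defs

variable {Γ : Type*}

/-- `StepOK 𝓑 seq ops` says that each set `seq i` in the sequence is obtained as the
union or intersection (according to `ops i`) of two sets, each of which is either a
generator in `𝓑` or an earlier set of the sequence. -/
def StepOK (𝓑 : Set (Set Γ)) {t : ℕ} (seq : Fin t → Set Γ) (ops : Fin t → Bool) : Prop :=
  ∀ i : Fin t, ∃ X Y : Set Γ,
    (X ∈ 𝓑 ∨ ∃ j : Fin t, j < i ∧ X = seq j) ∧
    (Y ∈ 𝓑 ∨ ∃ j : Fin t, j < i ∧ Y = seq j) ∧
    seq i = if ops i = true then X ∩ Y else X ∪ Y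

/-- The number of intersection operations used in the sequence. -/
def interCount {t : ℕ} (ops : Fin t → Bool) : ℕ :=
  (Finset.univ.filter fun i => ops i = true).card

/-- The number of union operations used in the sequence. -/
def unionCount {t : ℕ} (ops : Fin t → Bool) : ℕ :=
  (Finset.univ.filter fun i => ops i = false).card

/-- The discrete complexity `D(A | 𝓑)`: the minimum length of a sequence generating
`A` from `𝓑` (`⊤` if none exists). -/
noncomputable def Dtot (A : Set Γ) (𝓑 : Set (Set Γ)) : ℕ∞ :=
  sInf {m : ℕ∞ | ∃ (t : ℕ) (seq : Fin (t + 1) → Set Γ) (ops : Fin (t + 1) → Bool),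
    StepOK 𝓑 seq ops ∧ seq (Fin.last t) = A ∧ m = ((t + 1 : ℕ) : ℕ∞)}

/-- The intersection complexity `D_∩(A | 𝓑)`: the minimum number of intersection
operations over all sequences generating `A` from `𝓑`. -/
noncomputable def Dcap (A : Set Γ) (𝓑 : Set (Set Γ)) : ℕ∞ :=
  sInf {m : ℕ∞ | ∃ (t : ℕ) (seq : Fin (t + 1) → Set Γ) (ops : Fin (t + 1) → Bool),
    StepOK 𝓑 seq ops ∧ seq (Fin.last t) = A ∧ m = ((interCount ops : ℕ) : ℕ∞)}

/-- The union complexity `D_∪(A | 𝓑)`. -/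
noncomputable def Dcup (A : Set Γ) (𝓑 : Set (Set Γ)) : ℕ∞ :=
  sInf {m : ℕ∞ | ∃ (t : ℕ) (seq : Fin (t + 1) → Set Γ) (ops : Fin (t + 1) → Bool),
    StepOK 𝓑 seq ops ∧ seq (Fin.last t) = A ∧ m = ((unionCount ops : ℕ) : ℕ∞)}

/-- Simultaneous discrete complexity `D(A_1, …, A_ℓ | 𝓑)` of generating every set in
the family `As` from `𝓑`. -/
noncomputable def DtotSim (As : Set (Set Γ)) (𝓑 : Set (Set Γ)) : ℕ∞ :=
  sInf {m : ℕ∞ | ∃ (t : ℕ) (seq : Fin (t + 1) → Set Γ) (ops : Fin (t + 1) → Bool),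
    StepOK 𝓑 seq ops ∧ (∀ A ∈ As, ∃ i, seq i = A) ∧ m = ((t + 1 : ℕ) : ℕ∞)}

/-- Simultaneous intersection complexity. -/
noncomputable def DcapSim (As : Set (Set Γ)) (𝓑 : Set (Set Γ)) : ℕ∞ :=
  sInf {m : ℕ∞ | ∃ (t : ℕ) (seq : Fin (t + 1) → Set Γ) (ops : Fin (t + 1) → Bool),
    StepOK 𝓑 seq ops ∧ (∀ A ∈ As, ∃ i, seq i = A) ∧ m = ((interCount ops : ℕ) : ℕ∞)}

/-- Simultaneous union complexity. -/
noncomputable def DcupSim (As : Set (Set Γ)) (𝓑 : Set (Set Γ)) : ℕ∞ :=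
  sInf {m : ℕ∞ | ∃ (t : ℕ) (seq : Fin (t + 1) → Set Γ) (ops : Fin (t + 1) → Bool),
    StepOK 𝓑 seq ops ∧ (∀ A ∈ As, ∃ i, seq i = A) ∧ m = ((unionCount ops : ℕ) : ℕ∞)}

/-- A semi-filter over `U`: a nonempty, upward-closed (within `U`) family of subsets
of `U` not containing `∅`. -/
def SemiFilter (U : Set Γ) (F : Set (Set Γ)) : Prop :=
  F.Nonempty ∧ (∀ S ∈ F, S ⊆ U) ∧
    (∀ S ∈ F, ∀ T : Set Γ, S ⊆ T → T ⊆ U → T ∈ F) ∧ ∅ ∉ F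

/-- `F` is above the element `w` with respect to `𝓑` and `U`. -/
def Above (𝓑 : Set (Set Γ)) (U : Set Γ) (F : Set (Set Γ)) (w : Γ) : Prop :=
  ∀ B ∈ 𝓑, w ∈ B → B ∩ U ∈ F

/-- `F` preserves the pair `p = (E, H)`. -/
def PreservesPair (F : Set (Set Γ)) (p : Set Γ × Set Γ) : Prop :=
  p.1 ∈ F → p.2 ∈ F → p.1 ∩ p.2 ∈ F

/-- `Λ` is a family of pairs of subsets of `U = Aᶜ` such that no semi-filter over `U`
both preserves `Λ` and is above some element of `A`. -/
def Covers (A : Set Γ) (𝓑 : Set (Set Γ)) (Λ : Finset (Set Γ × Set Γ)) : Prop :=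
  (∀ p ∈ Λ, p.1 ⊆ Aᶜ ∧ p.2 ⊆ Aᶜ) ∧
    ¬∃ (F : Set (Set Γ)) (a : Γ), SemiFilter Aᶜ F ∧ a ∈ A ∧ Above 𝓑 Aᶜ F a ∧
      ∀ p ∈ Λ, PreservesPair F p

/-- The cover complexity `ρ(A, 𝓑)`. -/
noncomputable def rho (A : Set Γ) (𝓑 : Set (Set Γ)) : ℕ∞ :=
  sInf {m : ℕ∞ | ∃ Λ : Finset (Set Γ × Set Γ), Covers A 𝓑 Λ ∧ m = ((Λ.card : ℕ) : ℕ∞)}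

/-- A semi-ultra-filter over `U`: a semi-filter containing, for every `A' ⊆ U`, at
least one of `A'` and `U \ A'`. -/
def SemiUltraFilter (U : Set Γ) (F : Set (Set Γ)) : Prop :=
  SemiFilter U F ∧ ∀ A' : Set Γ, A' ⊆ U → (A' ∈ F ∨ U \ A' ∈ F)

/-- The conondeterministic cover complexity `ρ_ultra(A, 𝓑)`. -/
noncomputable def rhoUltra (A : Set Γ) (𝓑 : Set (Set Γ)) : ℕ∞ :=
  sInf {m : ℕ∞ | ∃ Λ : Finset (Set Γ × Set Γ),
    (∀ p ∈ Λ, p.1 ⊆ Aᶜ ∧ p.2 ⊆ Aᶜ) ∧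
    (¬∃ (F : Set (Set Γ)) (a : Γ), SemiUltraFilter Aᶜ F ∧ a ∈ A ∧ Above 𝓑 Aᶜ F a ∧
      ∀ p ∈ Λ, PreservesPair F p) ∧
    m = ((Λ.card : ℕ) : ℕ∞)}

/-- One step of the evaluation of a syntactic (possibly cyclic) sequence: an argument
is either a reference to a member of the sequence or a fixed generator set. -/
def cycEval {t : ℕ} (arg1 arg2 : Fin t → Fin t ⊕ Set Γ) (ops : Fin t → Bool) :
    ℕ → Fin t → Set Γ
  | 0 => fun _ => ∅
  | j + 1 => fun i =>
      cycEval arg1 arg2 ops j i ∪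
        (if ops i = true then
          Sum.elim (cycEval arg1 arg2 ops j) id (arg1 i) ∩
            Sum.elim (cycEval arg1 arg2 ops j) id (arg2 i)
        else
          Sum.elim (cycEval arg1 arg2 ops j) id (arg1 i) ∪
            Sum.elim (cycEval arg1 arg2 ops j) id (arg2 i))

/-- The fixed set arguments of a syntactic sequence must be generators from `𝓑`. -/
def ArgsOK (𝓑 : Set (Set Γ)) {t : ℕ} (arg1 arg2 : Fin t → Fin t ⊕ Set Γ) : Prop :=
  ∀ i : Fin t, (∀ B : Set Γ, arg1 i = Sum.inr B → B ∈ 𝓑) ∧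
    (∀ B : Set Γ, arg2 i = Sum.inr B → B ∈ 𝓑)

/-- The cyclic intersection complexity `D°_∩(A | 𝓑)`: the minimum number of
intersection operations over all syntactic sequences generating `A` from `𝓑`. -/
noncomputable def DcapCyc (A : Set Γ) (𝓑 : Set (Set Γ)) : ℕ∞ :=
  sInf {m : ℕ∞ | ∃ (t : ℕ) (arg1 arg2 : Fin (t + 1) → Fin (t + 1) ⊕ Set Γ)
      (ops : Fin (t + 1) → Bool),
    ArgsOK 𝓑 arg1 arg2 ∧
    (∃ j : ℕ, ∀ j' ≥ j, cycEval arg1 arg2 ops j' (Fin.last t) = A) ∧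
    m = ((interCount ops : ℕ) : ℕ∞)}

end Defs

/-- The row star `R_i ⊆ [N] × [M]`. -/
def rowSet (N M : ℕ) (i : Fin N) : Set (Fin N × Fin M) := {p | p.1 = i}

/-- The column star `C_j ⊆ [N] × [M]`. -/
def colSet (N M : ℕ) (j : Fin M) : Set (Fin N × Fin M) := {p | p.2 = j}

/-- The generators `𝓖_{N,M}` of graph complexity: all row stars and column stars. -/
def graphGens (N M : ℕ) : Set (Set (Fin N × Fin M)) :=
  Set.range (rowSet N M) ∪ Set.range (colSet N M)

/-- The generators `𝓑_m` of Boolean circuit complexity over `{0,1}^m`: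
all sets `B_i = {v : v_i = 1}` and their complements. -/
def cubeGens (m : ℕ) : Set (Set (Fin m → Bool)) :=
  {S | ∃ i : Fin m, S = {v | v i = true} ∨ S = {v | v i = false}}

/-- `bin : [N] → {0,1}^n` for `N = 2^n`: the element `k` (representing the integer
`k + 1`) maps to the string `w` with `num(w) = k`, i.e. position `j` holds bit
`n - 1 - j` of `k`. -/
def binMap (n : ℕ) (k : Fin (2 ^ n)) : Fin n → Bool :=
  fun j => (k : ℕ).testBit (n - 1 - (j : ℕ))

/-- The bijection `φ : [N] × [N] → {0,1}^{2n}`, `φ(u, v) = bin(u)bin(v)`. -/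
def phi (n : ℕ) (p : Fin (2 ^ n) × Fin (2 ^ n)) : Fin (2 * n) → Bool :=
  fun j =>
    if h : (j : ℕ) < n then binMap n p.1 ⟨(j : ℕ), h⟩
    else binMap n p.2 ⟨(j : ℕ) - n, by have := j.isLt; omega⟩

/-- The canonical family `𝓕_e` for an edge `e = (u, v)` of a graph `G`:
all `W ⊆ Ḡ` containing `R_u ∩ Ḡ` or `C_v ∩ Ḡ`. -/
def canonFam (N : ℕ) (G : Set (Fin N × Fin N)) (e : Fin N × Fin N) :
    Set (Set (Fin N × Fin N)) :=
  {W | W ⊆ Gᶜ ∧ (rowSet N N e.1 ∩ Gᶜ ⊆ W ∨ colSet N N e.2 ∩ Gᶜ ⊆ W)}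

/-- The canonical cover complexity `ρ_can(G, 𝓖_{N,N})`: the minimum size of a family
`Λ` of pairs of subsets of `Ḡ` such that every canonical semi-filter `𝓕_e`
(for `e ∈ G`, when it is a semi-filter) fails to preserve some pair in `Λ`. -/
noncomputable def rhoCan (N : ℕ) (G : Set (Fin N × Fin N)) : ℕ∞ :=
  sInf {m : ℕ∞ | ∃ Λ : Finset (Set (Fin N × Fin N) × Set (Fin N × Fin N)),
    (∀ p ∈ Λ, p.1 ⊆ Gᶜ ∧ p.2 ⊆ Gᶜ) ∧
    (∀ e ∈ G, SemiFilter Gᶜ (canonFam N G e) →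
      ∃ p ∈ Λ, ¬ PreservesPair (canonFam N G e) p) ∧
    m = ((Λ.card : ℕ) : ℕ∞)}

/-!
A sequence generating `φ(A₁)` from `𝓑₂` pulls back along `φ`, operation by operation, to a
sequence generating `φ⁻¹(φ(A₁)) = A₁` from the sets `φ⁻¹(B)`, `B ∈ 𝓑₂`; putting in front of it
one sequence that produces all these preimages from `𝓑₁` yields a sequence generating `A₁`
from `𝓑₁`. Concatenation adds costs, so this gives the first inequality, and concatenating
sequences for the individual preimages gives the second. Length, number of intersections and
number of unions are all additive costs of the form "sum of a weight per operation", so the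
three cases are one argument.
-/

section Transference

variable {Γ Γ₁ Γ₂ : Type*}

def opCost (w : Bool → ℕ) {t : ℕ} (ops : Fin t → Bool) : ℕ :=
  ∑ i, w (ops i)

noncomputable def weightedComplexity (w : Bool → ℕ) (A : Set Γ) (𝓑 : Set (Set Γ)) : ℕ∞ :=
  sInf {m : ℕ∞ | ∃ (t : ℕ) (seq : Fin (t + 1) → Set Γ) (ops : Fin (t + 1) → Bool),
    StepOK 𝓑 seq ops ∧ seq (Fin.last t) = A ∧ m = ((opCost w ops : ℕ) : ℕ∞)}

noncomputable def weightedSimComplexity (w : Bool → ℕ) (As : Set (Set Γ))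
    (𝓑 : Set (Set Γ)) : ℕ∞ :=
  sInf {m : ℕ∞ | ∃ (t : ℕ) (seq : Fin (t + 1) → Set Γ) (ops : Fin (t + 1) → Bool),
    StepOK 𝓑 seq ops ∧ (∀ A ∈ As, ∃ i, seq i = A) ∧ m = ((opCost w ops : ℕ) : ℕ∞)}

lemma opCost_const_one {t : ℕ} (ops : Fin t → Bool) : opCost (fun _ => 1) ops = t := by
  simp [opCost]

lemma opCost_toNat {t : ℕ} (ops : Fin t → Bool) : opCost Bool.toNat ops = interCount ops := by
  rw [interCount, Finset.card_filter]
  exact Finset.sum_congr rfl fun i _ => by cases ops i <;> rfl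

lemma opCost_not_toNat {t : ℕ} (ops : Fin t → Bool) :
    opCost (fun b => (!b).toNat) ops = unionCount ops := by
  rw [unionCount, Finset.card_filter]
  exact Finset.sum_congr rfl fun i _ => by cases ops i <;> rfl

lemma opCost_append (w : Bool → ℕ) {t₁ t₂ : ℕ} (o₁ : Fin t₁ → Bool) (o₂ : Fin t₂ → Bool) :
    opCost w (Fin.append o₁ o₂) = opCost w o₁ + opCost w o₂ := by
  simp [opCost, Fin.sum_univ_add]

lemma Dtot_eq_weightedComplexity (A : Set Γ) (𝓑 : Set (Set Γ)) :
    Dtot A 𝓑 = weightedComplexity (fun _ => 1) A 𝓑 := by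
  simp only [weightedComplexity, opCost_const_one]; rfl

lemma Dcap_eq_weightedComplexity (A : Set Γ) (𝓑 : Set (Set Γ)) :
    Dcap A 𝓑 = weightedComplexity Bool.toNat A 𝓑 := by
  simp only [weightedComplexity, opCost_toNat]; rfl

lemma Dcup_eq_weightedComplexity (A : Set Γ) (𝓑 : Set (Set Γ)) :
    Dcup A 𝓑 = weightedComplexity (fun b => (!b).toNat) A 𝓑 := by
  simp only [weightedComplexity, opCost_not_toNat]; rfl

lemma DtotSim_eq_weightedSimComplexity (As : Set (Set Γ)) (𝓑 : Set (Set Γ)) :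
    DtotSim As 𝓑 = weightedSimComplexity (fun _ => 1) As 𝓑 := by
  simp only [weightedSimComplexity, opCost_const_one]; rfl

lemma DcapSim_eq_weightedSimComplexity (As : Set (Set Γ)) (𝓑 : Set (Set Γ)) :
    DcapSim As 𝓑 = weightedSimComplexity Bool.toNat As 𝓑 := by
  simp only [weightedSimComplexity, opCost_toNat]; rfl

lemma DcupSim_eq_weightedSimComplexity (As : Set (Set Γ)) (𝓑 : Set (Set Γ)) :
    DcupSim As 𝓑 = weightedSimComplexity (fun b => (!b).toNat) As 𝓑 := by
  simp only [weightedSimComplexity, opCost_not_toNat]; rfl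

lemma sInf_le_sInf_add_sInf {S T U : Set ℕ∞} (h : ∀ x ∈ T, ∀ y ∈ U, ∃ z ∈ S, z ≤ x + y) :
    sInf S ≤ sInf T + sInf U := by
  rcases T.eq_empty_or_nonempty with rfl | hT
  · simp
  rcases U.eq_empty_or_nonempty with rfl | hU
  · simp
  obtain ⟨z, hz, hle⟩ := h _ (csInf_mem hT) _ (csInf_mem hU)
  exact (sInf_le hz).trans hle

lemma StepOK.append {𝓑 𝓑' : Set (Set Γ)} {t₁ t₂ : ℕ} {s₁ : Fin t₁ → Set Γ}
    {o₁ : Fin t₁ → Bool} {s₂ : Fin t₂ → Set Γ} {o₂ : Fin t₂ → Bool}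
    (h₁ : StepOK 𝓑 s₁ o₁) (h₂ : StepOK 𝓑' s₂ o₂) (h𝓑' : ∀ X ∈ 𝓑', X ∈ 𝓑 ∨ ∃ k, X = s₁ k) :
    StepOK 𝓑 (Fin.append s₁ s₂) (Fin.append o₁ o₂) := by
  intro i
  induction i using Fin.addCases with
  | left i =>
    obtain ⟨X, Y, hX, hY, hi⟩ := h₁ i
    have lift : ∀ Z, (Z ∈ 𝓑 ∨ ∃ j, j < i ∧ Z = s₁ j) →
        Z ∈ 𝓑 ∨ ∃ j, j < Fin.castAdd t₂ i ∧ Z = Fin.append s₁ s₂ j := by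
      rintro Z (hZ | ⟨j, hj, rfl⟩)
      exacts [.inl hZ, .inr ⟨Fin.castAdd t₂ j, hj, (Fin.append_left ..).symm⟩]
    exact ⟨X, Y, lift X hX, lift Y hY, by simpa using hi⟩
  | right i =>
    obtain ⟨X, Y, hX, hY, hi⟩ := h₂ i
    have lift : ∀ Z, (Z ∈ 𝓑' ∨ ∃ j, j < i ∧ Z = s₂ j) →
        Z ∈ 𝓑 ∨ ∃ j, j < Fin.natAdd t₁ i ∧ Z = Fin.append s₁ s₂ j := by
      rintro Z (hZ | ⟨j, hj, rfl⟩)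
      · rcases h𝓑' Z hZ with hZ | ⟨k, rfl⟩
        · exact .inl hZ
        · refine .inr ⟨Fin.castAdd t₂ k, ?_, (Fin.append_left ..).symm⟩
          simp only [Fin.lt_def, Fin.val_castAdd, Fin.val_natAdd]
          omega
      · exact .inr ⟨Fin.natAdd t₁ j, (Fin.natAdd_lt_natAdd_iff t₁).2 hj,
          (Fin.append_right ..).symm⟩
    exact ⟨X, Y, lift X hX, lift Y hY, by simpa using hi⟩

lemma StepOK.preimage (φ : Γ₁ → Γ₂) {𝓑 : Set (Set Γ₂)} {t : ℕ} {s : Fin t → Set Γ₂}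
    {o : Fin t → Bool} (h : StepOK 𝓑 s o) :
    StepOK ((fun B => φ ⁻¹' B) '' 𝓑) (fun i => φ ⁻¹' s i) o := by
  intro i
  obtain ⟨X, Y, hX, hY, hi⟩ := h i
  have pull : ∀ Z, (Z ∈ 𝓑 ∨ ∃ j, j < i ∧ Z = s j) →
      φ ⁻¹' Z ∈ (fun B => φ ⁻¹' B) '' 𝓑 ∨ ∃ j, j < i ∧ φ ⁻¹' Z = φ ⁻¹' s j := by
    rintro Z (hZ | ⟨j, hj, rfl⟩)
    exacts [.inl ⟨Z, hZ, rfl⟩, .inr ⟨j, hj, rfl⟩]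
  refine ⟨φ ⁻¹' X, φ ⁻¹' Y, pull X hX, pull Y hY, ?_⟩
  simp only [hi]
  split <;> rfl

lemma weightedComplexity_of_empty (w : Bool → ℕ) (A : Set Γ) :
    weightedComplexity w A ∅ = ⊤ := by
  refine sInf_eq_top.2 ?_
  rintro m ⟨t, seq, ops, hok, -, -⟩
  obtain ⟨X, -, hX, -⟩ := hok 0
  simp at hX

lemma weightedComplexity_preimage_le (w : Bool → ℕ) (𝓑₁ : Set (Set Γ₁))
    (𝓑₂ : Set (Set Γ₂)) (φ : Γ₁ → Γ₂) (A₂ : Set Γ₂) :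
    weightedComplexity w (φ ⁻¹' A₂) 𝓑₁ ≤
      weightedComplexity w A₂ 𝓑₂ + weightedSimComplexity w ((fun B => φ ⁻¹' B) '' 𝓑₂) 𝓑₁ := by
  refine sInf_le_sInf_add_sInf ?_
  rintro _ ⟨t₂, s₂, o₂, hok₂, hlast, rfl⟩ _ ⟨t₁, s₁, o₁, hok₁, hgens, rfl⟩
  refine ⟨_, ⟨t₁ + 1 + t₂, Fin.append (m := t₁ + 1) s₁ fun i => φ ⁻¹' s₂ i,
    Fin.append (m := t₁ + 1) o₁ o₂, hok₁.append (hok₂.preimage φ) ?_, ?_, rfl⟩, ?_⟩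
  · rintro _ ⟨B, hB, rfl⟩
    obtain ⟨i, hi⟩ := hgens _ ⟨B, hB, rfl⟩
    exact .inr ⟨i, hi.symm⟩
  · rw [← Fin.natAdd_last, Fin.append_right, hlast]
  · rw [opCost_append, add_comm, Nat.cast_add]

lemma weightedSimComplexity_singleton_le (w : Bool → ℕ) (A : Set Γ) (𝓑 : Set (Set Γ)) :
    weightedSimComplexity w {A} 𝓑 ≤ weightedComplexity w A 𝓑 := by
  refine sInf_le_sInf ?_
  rintro _ ⟨t, seq, ops, hok, hlast, rfl⟩
  exact ⟨t, seq, ops, hok, by simpa using ⟨_, hlast⟩, rfl⟩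

lemma weightedSimComplexity_union_le (w : Bool → ℕ) (S T : Set (Set Γ)) (𝓑 : Set (Set Γ)) :
    weightedSimComplexity w (S ∪ T) 𝓑 ≤
      weightedSimComplexity w S 𝓑 + weightedSimComplexity w T 𝓑 := by
  refine sInf_le_sInf_add_sInf ?_
  rintro _ ⟨tS, sS, oS, hokS, hS, rfl⟩ _ ⟨tT, sT, oT, hokT, hT, rfl⟩
  refine ⟨_, ⟨tS + 1 + tT, Fin.append (m := tS + 1) sS sT, Fin.append (m := tS + 1) oS oT,
    hokS.append hokT fun X hX => .inl hX, ?_, rfl⟩, by rw [opCost_append, Nat.cast_add]⟩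
  rintro A (hA | hA)
  · obtain ⟨i, hi⟩ := hS A hA
    exact ⟨Fin.castAdd (tT + 1) i, by rw [Fin.append_left, hi]⟩
  · obtain ⟨i, hi⟩ := hT A hA
    exact ⟨Fin.natAdd (tS + 1) i, by rw [Fin.append_right, hi]⟩

lemma weightedSimComplexity_image_le_sum {ι : Type*} (w : Bool → ℕ) (f : ι → Set Γ)
    (𝓑 : Set (Set Γ)) {s : Finset ι} (hs : s.Nonempty) :
    weightedSimComplexity w (f '' s) 𝓑 ≤ ∑ i ∈ s, weightedComplexity w (f i) 𝓑 := by
  induction hs using Finset.Nonempty.cons_induction with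
  | singleton i => simpa using weightedSimComplexity_singleton_le w (f i) 𝓑
  | cons i s hi hs ih =>
    rw [Finset.coe_cons, Set.image_insert_eq, Set.insert_eq, Finset.sum_cons]
    exact (weightedSimComplexity_union_le w _ _ 𝓑).trans
      (add_le_add (weightedSimComplexity_singleton_le w (f i) 𝓑) ih)

theorem weightedComplexity_transference (w : Bool → ℕ) (𝓑₁ : Set (Set Γ₁))
    (𝓑₂ : Finset (Set Γ₂)) {φ : Γ₁ → Γ₂} (hφ : Function.Injective φ) (A₁ : Set Γ₁) :
    weightedComplexity w A₁ 𝓑₁ ≤ weightedComplexity w (φ '' A₁) 𝓑₂ +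
        weightedSimComplexity w ((fun B => φ ⁻¹' B) '' (𝓑₂ : Set (Set Γ₂))) 𝓑₁ ∧
      weightedComplexity w (φ '' A₁) 𝓑₂ +
          weightedSimComplexity w ((fun B => φ ⁻¹' B) '' (𝓑₂ : Set (Set Γ₂))) 𝓑₁ ≤
        weightedComplexity w (φ '' A₁) 𝓑₂ + ∑ B ∈ 𝓑₂, weightedComplexity w (φ ⁻¹' B) 𝓑₁ := by
  refine ⟨?_, ?_⟩
  · simpa only [hφ.preimage_image] using weightedComplexity_preimage_le w 𝓑₁ 𝓑₂ φ (φ '' A₁)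
  · rcases 𝓑₂.eq_empty_or_nonempty with rfl | h𝓑₂
    · simp [weightedComplexity_of_empty]
    · exact add_le_add_right (weightedSimComplexity_image_le_sum w _ 𝓑₁ h𝓑₂) _

end Transference

theorem transference_of_lower_bounds_general {Γ₁ Γ₂ : Type*}
    (𝓑₁ : Set (Set Γ₁)) (𝓑₂ : Finset (Set Γ₂))
    (φ : Γ₁ → Γ₂) (hφ : Function.Injective φ) (A₁ : Set Γ₁) :
    (Dtot A₁ 𝓑₁ ≤
        Dtot (φ '' A₁) ↑𝓑₂ + DtotSim ((fun B => φ ⁻¹' B) '' (𝓑₂ : Set (Set Γ₂))) 𝓑₁ ∧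
      Dtot (φ '' A₁) ↑𝓑₂ + DtotSim ((fun B => φ ⁻¹' B) '' (𝓑₂ : Set (Set Γ₂))) 𝓑₁ ≤
        Dtot (φ '' A₁) ↑𝓑₂ + ∑ B ∈ 𝓑₂, Dtot (φ ⁻¹' B) 𝓑₁) ∧
    (Dcap A₁ 𝓑₁ ≤
        Dcap (φ '' A₁) ↑𝓑₂ + DcapSim ((fun B => φ ⁻¹' B) '' (𝓑₂ : Set (Set Γ₂))) 𝓑₁ ∧
      Dcap (φ '' A₁) ↑𝓑₂ + DcapSim ((fun B => φ ⁻¹' B) '' (𝓑₂ : Set (Set Γ₂))) 𝓑₁ ≤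
        Dcap (φ '' A₁) ↑𝓑₂ + ∑ B ∈ 𝓑₂, Dcap (φ ⁻¹' B) 𝓑₁) ∧
    (Dcup A₁ 𝓑₁ ≤
        Dcup (φ '' A₁) ↑𝓑₂ + DcupSim ((fun B => φ ⁻¹' B) '' (𝓑₂ : Set (Set Γ₂))) 𝓑₁ ∧
      Dcup (φ '' A₁) ↑𝓑₂ + DcupSim ((fun B => φ ⁻¹' B) '' (𝓑₂ : Set (Set Γ₂))) 𝓑₁ ≤
        Dcup (φ '' A₁) ↑𝓑₂ + ∑ B ∈ 𝓑₂, Dcup (φ ⁻¹' B) 𝓑₁) := by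
  simp only [Dtot_eq_weightedComplexity, Dcap_eq_weightedComplexity,
    Dcup_eq_weightedComplexity, DtotSim_eq_weightedSimComplexity,
    DcapSim_eq_weightedSimComplexity, DcupSim_eq_weightedSimComplexity]
  exact ⟨weightedComplexity_transference _ 𝓑₁ 𝓑₂ hφ A₁,
    weightedComplexity_transference _ 𝓑₁ 𝓑₂ hφ A₁,
    weightedComplexity_transference _ 𝓑₁ 𝓑₂ hφ A₁⟩

/-- Transference of lower bounds between discrete spaces: for
discrete spaces `⟨Γ₁, 𝓑₁⟩` and `⟨Γ₂, 𝓑₂⟩` and an injective `φ : Γ₁ → Γ₂`,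
`D(A₁ | 𝓑₁) ≤ D(φ(A₁) | 𝓑₂) + D(φ⁻¹(B²_1), …, φ⁻¹(B²_m) | 𝓑₁)
  ≤ D(φ(A₁) | 𝓑₂) + Σ_{B ∈ 𝓑₂} D(φ⁻¹(B) | 𝓑₁)`,
and the same holds for `D_∩` and `D_∪`. -/
theorem transference_of_lower_bounds {Γ₁ Γ₂ : Type*}
    [Fintype Γ₁] [Nonempty Γ₁] [Fintype Γ₂] [Nonempty Γ₂]
    (𝓑₁ : Set (Set Γ₁)) (𝓑₂ : Finset (Set Γ₂))
    (hsp₁ : ⋃₀ 𝓑₁ = Set.univ) (hsp₂ : ⋃₀ (𝓑₂ : Set (Set Γ₂)) = Set.univ)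
    (φ : Γ₁ → Γ₂) (hφ : Function.Injective φ) (A₁ : Set Γ₁) :
    (Dtot A₁ 𝓑₁ ≤
        Dtot (φ '' A₁) ↑𝓑₂ + DtotSim ((fun B => φ ⁻¹' B) '' (𝓑₂ : Set (Set Γ₂))) 𝓑₁ ∧
      Dtot (φ '' A₁) ↑𝓑₂ + DtotSim ((fun B => φ ⁻¹' B) '' (𝓑₂ : Set (Set Γ₂))) 𝓑₁ ≤
        Dtot (φ '' A₁) ↑𝓑₂ + ∑ B ∈ 𝓑₂, Dtot (φ ⁻¹' B) 𝓑₁) ∧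
    (Dcap A₁ 𝓑₁ ≤
        Dcap (φ '' A₁) ↑𝓑₂ + DcapSim ((fun B => φ ⁻¹' B) '' (𝓑₂ : Set (Set Γ₂))) 𝓑₁ ∧
      Dcap (φ '' A₁) ↑𝓑₂ + DcapSim ((fun B => φ ⁻¹' B) '' (𝓑₂ : Set (Set Γ₂))) 𝓑₁ ≤
        Dcap (φ '' A₁) ↑𝓑₂ + ∑ B ∈ 𝓑₂, Dcap (φ ⁻¹' B) 𝓑₁) ∧
    (Dcup A₁ 𝓑₁ ≤
        Dcup (φ '' A₁) ↑𝓑₂ + DcupSim ((fun B => φ ⁻¹' B) '' (𝓑₂ : Set (Set Γ₂))) 𝓑₁ ∧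
      Dcup (φ '' A₁) ↑𝓑₂ + DcupSim ((fun B => φ ⁻¹' B) '' (𝓑₂ : Set (Set Γ₂))) 𝓑₁ ≤
        Dcup (φ '' A₁) ↑𝓑₂ + ∑ B ∈ 𝓑₂, Dcup (φ ⁻¹' B) 𝓑₁) :=
  transference_of_lower_bounds_general 𝓑₁ 𝓑₂ φ hφ A₁
end

section
/- Let I_1, …, I_t together with fixed operations I_i = K_{i₁} ⋆_i K_{i₂} be a syntactic sequence over a family 𝓑 of subsets of a finite ground set Γ. Then for every j ≥ t and every i ∈ [t], I_i^{j+1} = I_i^j; that is, the evaluation of the syntactic sequence converges after at most t steps. -/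
open Set Filter

/-! Fix a point `x`. The set of indices `i` with `x ∈ I_i^j` grows with `j` and determines the
same set at step `j + 1`, so once it stalls it stays constant. A growing chain of subsets of
`Fin t` can increase strictly at most `t` times, hence it stalls by step `t`. -/

section StationaryChain

variable {α : Type*} {s : ℕ → Set α}

theorem le_ncard_of_forall_lt_succ_ne [Finite α] (hs : Monotone s) {m : ℕ}
    (hgrow : ∀ k < m, s (k + 1) ≠ s k) : m ≤ (s m).ncard := by
  induction m with
  | zero => exact Nat.zero_le _
  | succ m ih =>
    have hlt : s m ⊂ s (m + 1) :=
      ssubset_iff_subset_ne.2 ⟨hs m.le_succ, (hgrow m m.lt_succ_self).symm⟩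
    have := Set.ncard_lt_ncard hlt
    have := ih fun k hk => hgrow k (hk.trans m.lt_succ_self)
    omega

theorem succ_eq_of_succ_eq_of_le (hstall : ∀ m, s (m + 1) = s m → s (m + 2) = s (m + 1))
    {k : ℕ} (hk : s (k + 1) = s k) {m : ℕ} (hkm : k ≤ m) : s (m + 1) = s m := by
  induction m, hkm using Nat.le_induction with
  | base => exact hk
  | succ m _ ih => exact hstall m ih

theorem Monotone.succ_eq_of_card_le [Finite α] (hs : Monotone s)
    (hstall : ∀ m, s (m + 1) = s m → s (m + 2) = s (m + 1))
    {j : ℕ} (hj : Nat.card α ≤ j) : s (j + 1) = s j := by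
  by_contra hne
  have hgrow : ∀ k < j + 1, s (k + 1) ≠ s k := fun k hk hkeq =>
    hne (succ_eq_of_succ_eq_of_le hstall hkeq (Nat.lt_succ_iff.1 hk))
  have := le_ncard_of_forall_lt_succ_ne hs hgrow
  have := Set.ncard_le_card (s (j + 1))
  omega

end StationaryChain

section CycEval

variable {Γ : Type*} {t : ℕ} (arg1 arg2 : Fin t → Fin t ⊕ Set Γ) (ops : Fin t → Bool)

theorem cycEval_subset_succ (j : ℕ) (i : Fin t) :
    cycEval arg1 arg2 ops j i ⊆ cycEval arg1 arg2 ops (j + 1) i :=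
  subset_union_left

theorem mem_cycEval_succ_congr {x : Γ} {j k : ℕ}
    (h : ∀ i, x ∈ cycEval arg1 arg2 ops j i ↔ x ∈ cycEval arg1 arg2 ops k i) (i : Fin t) :
    x ∈ cycEval arg1 arg2 ops (j + 1) i ↔ x ∈ cycEval arg1 arg2 ops (k + 1) i := by
  have harg : ∀ a : Fin t ⊕ Set Γ, x ∈ Sum.elim (cycEval arg1 arg2 ops j) id a ↔
      x ∈ Sum.elim (cycEval arg1 arg2 ops k) id a := by
    rintro (i' | B)
    · exact h i'
    · exact Iff.rfl
  simp only [cycEval, mem_union, h i]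
  split_ifs <;> simp only [mem_inter_iff, mem_union, harg]

end CycEval

theorem syntactic_sequence_convergence_general {Γ : Type*}
    {t : ℕ} (arg1 arg2 : Fin t → Fin t ⊕ Set Γ)
    (ops : Fin t → Bool) :
    ∀ j ≥ t, ∀ i : Fin t,
      cycEval arg1 arg2 ops (j + 1) i = cycEval arg1 arg2 ops j i := by
  intro j hj i
  ext x
  let pattern : ℕ → Set (Fin t) := fun m => {i | x ∈ cycEval arg1 arg2 ops m i}
  have hmono : Monotone pattern :=
    monotone_nat_of_le_succ fun m i hi => cycEval_subset_succ arg1 arg2 ops m i hi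
  have hstall : ∀ m, pattern (m + 1) = pattern m → pattern (m + 2) = pattern (m + 1) :=
    fun m hm => ext <| mem_cycEval_succ_congr arg1 arg2 ops fun i => Set.ext_iff.1 hm i
  have hfix := hmono.succ_eq_of_card_le hstall (by simpa using hj)
  exact Set.ext_iff.1 hfix i

/-- Convergence of the evaluation procedure: the evaluation of a
syntactic sequence of length `t` converges after at most `t` steps: for every
`j ≥ t` and every `i`, `I_i^{j+1} = I_i^j`. -/
theorem syntactic_sequence_convergence {Γ : Type*} [Fintype Γ] [Nonempty Γ]
    (𝓑 : Set (Set Γ)) {t : ℕ} (arg1 arg2 : Fin t → Fin t ⊕ Set Γ)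
    (ops : Fin t → Bool) (hargs : ArgsOK 𝓑 arg1 arg2) :
    ∀ j ≥ t, ∀ i : Fin t,
      cycEval arg1 arg2 ops (j + 1) i = cycEval arg1 arg2 ops j i :=
  syntactic_sequence_convergence_general arg1 arg2 ops
end

section
/- Let Γ be a nonempty finite set, let 𝓑 be a family of subsets of Γ with Γ = ∪_{B ∈ 𝓑} B, and let A ⊆ Γ be non-trivial. Then D(A | 𝓑) is finite if and only if there do not exist elements a ∈ A and b ∈ Γ ∖ A such that every generator B ∈ 𝓑 containing a also contains b. -/
open Set Filter

/-! `D(A | 𝓑)` is finite exactly when `A` lies in the lattice generated by `𝓑`, since generating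
sequences can be concatenated. Unions and intersections preserve the property "every set containing
`a` contains `b`", so a pair `a ∈ A`, `b ∉ A` with this property for all generators obstructs
generation. Conversely, if every such pair is separated by some `B a b ∈ 𝓑`, then
`A = ⋃_{a ∈ A} ⋂_{b ∉ A} B a b`. -/

section Generation

variable {Γ : Type*} {𝓑 : Set (Set Γ)}

inductive Generated (𝓑 : Set (Set Γ)) : Set Γ → Prop
  | base {B : Set Γ} : B ∈ 𝓑 → Generated 𝓑 B
  | inter {X Y : Set Γ} : Generated 𝓑 X → Generated 𝓑 Y → Generated 𝓑 (X ∩ Y)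
  | union {X Y : Set Γ} : Generated 𝓑 X → Generated 𝓑 Y → Generated 𝓑 (X ∪ Y)

namespace Generated

theorem mem_of_mem {a b : Γ} (hab : ∀ B ∈ 𝓑, a ∈ B → b ∈ B) {S : Set Γ}
    (hS : Generated 𝓑 S) (ha : a ∈ S) : b ∈ S := by
  induction hS with
  | base hB => exact hab _ hB ha
  | inter _ _ ihX ihY => exact ⟨ihX ha.1, ihY ha.2⟩
  | union _ _ ihX ihY => exact ha.imp ihX ihY

theorem iUnion {ι : Type*} [Finite ι] [Nonempty ι] {f : ι → Set Γ}
    (h : ∀ i, Generated 𝓑 (f i)) : Generated 𝓑 (⋃ i, f i) := by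
  have := Fintype.ofFinite ι
  rw [← Set.iSup_eq_iUnion, ← Finset.sup'_univ_eq_ciSup]
  exact Finset.sup'_induction _ _ (fun _ hX _ hY => hX.union hY) fun i _ => h i

theorem iInter {ι : Type*} [Finite ι] [Nonempty ι] {f : ι → Set Γ}
    (h : ∀ i, Generated 𝓑 (f i)) : Generated 𝓑 (⋂ i, f i) := by
  have := Fintype.ofFinite ι
  rw [← Set.iInf_eq_iInter, ← Finset.inf'_univ_eq_ciInf]
  exact Finset.inf'_induction _ _ (fun _ hX _ hY => hX.inter hY) fun i _ => h i

end Generated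

theorem StepOK.generated {t : ℕ} {seq : Fin t → Set Γ} {ops : Fin t → Bool}
    (hstep : StepOK 𝓑 seq ops) (i : Fin t) : Generated 𝓑 (seq i) := by
  induction i using WellFoundedLT.induction with
  | _ i ih =>
    obtain ⟨X, Y, hX, hY, hi⟩ := hstep i
    have hgen : ∀ {W}, (W ∈ 𝓑 ∨ ∃ j < i, W = seq j) → Generated 𝓑 W := by
      rintro W (hW | ⟨j, hj, rfl⟩)
      exacts [.base hW, ih j hj]
    rw [hi]
    split
    · exact (hgen hX).inter (hgen hY)
    · exact (hgen hX).union (hgen hY)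

/-- Generating sequences as lists, where concatenation is easier to handle than on `Fin t`. -/
inductive Chain (𝓑 : Set (Set Γ)) : List (Set Γ) → Prop
  | nil : Chain 𝓑 []
  | snoc {L : List (Set Γ)} {X Y : Set Γ} (b : Bool) : Chain 𝓑 L → (X ∈ 𝓑 ∨ X ∈ L) →
      (Y ∈ 𝓑 ∨ Y ∈ L) → Chain 𝓑 (L ++ [if b then X ∩ Y else X ∪ Y])

namespace Chain

theorem append {L₁ L₂ : List (Set Γ)} (h₁ : Chain 𝓑 L₁) (h₂ : Chain 𝓑 L₂) :
    Chain 𝓑 (L₁ ++ L₂) := by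
  induction h₂ with
  | nil => simpa using h₁
  | snoc b _ hX hY ih =>
    rw [← List.append_assoc]
    exact ih.snoc b (hX.imp_right (List.mem_append_right _))
      (hY.imp_right (List.mem_append_right _))

theorem getElem_eq {L : List (Set Γ)} (h : Chain 𝓑 L) (i : ℕ) (hi : i < L.length) :
    ∃ (b : Bool) (X Y : Set Γ), (X ∈ 𝓑 ∨ X ∈ L.take i) ∧ (Y ∈ 𝓑 ∨ Y ∈ L.take i) ∧
      L[i] = if b then X ∩ Y else X ∪ Y := by
  induction h with
  | nil => simp at hi
  | @snoc L X Y b _ hX hY ih =>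
    rw [List.length_append, List.length_singleton] at hi
    rcases (Nat.lt_succ_iff.mp hi).lt_or_eq with hi | rfl
    · rw [List.take_append_of_le_length hi.le, List.getElem_append_left hi]
      exact ih hi
    · rw [List.take_left, List.getElem_concat_length rfl]
      exact ⟨b, X, Y, hX, hY, rfl⟩

end Chain

theorem Generated.exists_chain {A : Set Γ} (h : Generated 𝓑 A) :
    ∃ L, Chain 𝓑 (L ++ [A]) := by
  induction h with
  | @base B hB => exact ⟨[], by simpa using Chain.nil.snoc false (Or.inl hB) (Or.inl hB)⟩
  | @inter X Y _ _ ihX ihY =>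
    obtain ⟨L₁, h₁⟩ := ihX
    obtain ⟨L₂, h₂⟩ := ihY
    exact ⟨_, (h₁.append h₂).snoc true (.inr (by simp)) (.inr (by simp))⟩
  | @union X Y _ _ ihX ihY =>
    obtain ⟨L₁, h₁⟩ := ihX
    obtain ⟨L₂, h₂⟩ := ihY
    exact ⟨_, (h₁.append h₂).snoc false (.inr (by simp)) (.inr (by simp))⟩

theorem Chain.stepOK {L : List (Set Γ)} (h : Chain 𝓑 L) :
    ∃ ops, StepOK 𝓑 (fun i : Fin L.length => L[i]) ops := by
  have hstep (i : Fin L.length) : ∃ (b : Bool) (X Y : Set Γ),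
      (X ∈ 𝓑 ∨ ∃ j < i, X = L[j]) ∧ (Y ∈ 𝓑 ∨ ∃ j < i, Y = L[j]) ∧
      L[i] = if b then X ∩ Y else X ∪ Y := by
    obtain ⟨b, X, Y, hX, hY, hi⟩ := h.getElem_eq i i.2
    have earlier : ∀ {W}, (W ∈ 𝓑 ∨ W ∈ L.take i) → W ∈ 𝓑 ∨ ∃ j < i, W = L[j] := by
      rintro W (hW | hW)
      · exact .inl hW
      · obtain ⟨j, hj, rfl⟩ := List.mem_iff_getElem.mp hW
        rw [List.length_take] at hj
        exact .inr ⟨⟨j, by omega⟩, Fin.mk_lt_of_lt_val (by omega), List.getElem_take⟩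
    exact ⟨b, X, Y, earlier hX, earlier hY, hi⟩
  choose ops X Y hX hY hi using hstep
  exact ⟨ops, fun i => ⟨X i, Y i, hX i, hY i, hi i⟩⟩

theorem StepOK.comp_cast {t t' : ℕ} {seq : Fin t → Set Γ} {ops : Fin t → Bool} (h : t = t')
    (hstep : StepOK 𝓑 seq ops) : StepOK 𝓑 (seq ∘ Fin.cast h.symm) (ops ∘ Fin.cast h.symm) := by
  subst h
  exact hstep

theorem dtot_ne_top_iff_generated {A : Set Γ} : Dtot A 𝓑 ≠ ⊤ ↔ Generated 𝓑 A := by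
  rw [Dtot, Ne, sInf_eq_top]
  push Not
  constructor
  · rintro ⟨_, ⟨t, seq, ops, hstep, rfl, -⟩, -⟩
    exact hstep.generated _
  · intro hA
    obtain ⟨L, hL⟩ := hA.exists_chain
    obtain ⟨ops, hops⟩ := hL.stepOK
    have hlen : (L ++ [A]).length = L.length + 1 := by simp
    exact ⟨_, ⟨L.length, _, _, hops.comp_cast hlen, by simp, rfl⟩, ENat.natCast_ne_top _⟩

theorem generated_of_separated [Finite Γ] {A : Set Γ} (hA : A.Nonempty) (hAc : Aᶜ.Nonempty)
    (hsep : ∀ a ∈ A, ∀ b ∈ Aᶜ, ∃ B ∈ 𝓑, a ∈ B ∧ b ∉ B) : Generated 𝓑 A := by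
  choose B hB haB hbB using hsep
  have := hA.to_subtype
  have := hAc.to_subtype
  have hA_eq : A = ⋃ a : A, ⋂ b : ↥Aᶜ, B a a.2 b b.2 := by
    ext x
    simp only [Set.mem_iUnion, Set.mem_iInter]
    refine ⟨fun hx => ⟨⟨x, hx⟩, fun b => haB x hx b b.2⟩, fun ⟨a, hx⟩ => ?_⟩
    by_contra hxA
    exact hbB a a.2 x hxA (hx ⟨x, hxA⟩)
  rw [hA_eq]
  exact .iUnion fun a => .iInter fun b => .base (hB a a.2 b b.2)

end Generation

theorem finiteness_test_general {Γ : Type*} [Fintype Γ]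
    (𝓑 : Set (Set Γ))
    (A : Set Γ) (hA₁ : A ≠ ∅) (hA₂ : A ≠ Set.univ) :
    Dtot A 𝓑 ≠ ⊤ ↔ ¬∃ a ∈ A, ∃ b ∈ Aᶜ, ∀ B ∈ 𝓑, a ∈ B → b ∈ B := by
  rw [dtot_ne_top_iff_generated]
  constructor
  · rintro hA ⟨a, ha, b, hb, hab⟩
    exact hb (hA.mem_of_mem hab ha)
  · intro hsep
    push Not at hsep
    exact generated_of_separated (Set.nonempty_iff_ne_empty.mpr hA₁)
      (Set.nonempty_compl.mpr hA₂) hsep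

/-- Finiteness test: for a nonempty finite ground set `Γ`, a
family `𝓑` with `Γ = ⋃ 𝓑`, and a non-trivial `A ⊆ Γ`, `D(A | 𝓑)` is finite if and
only if there are no `a ∈ A` and `b ∈ Γ ∖ A` such that every generator containing
`a` also contains `b`. -/
theorem finiteness_test {Γ : Type*} [Fintype Γ] [Nonempty Γ]
    (𝓑 : Set (Set Γ)) (hsp : ⋃₀ 𝓑 = Set.univ)
    (A : Set Γ) (hA₁ : A ≠ ∅) (hA₂ : A ≠ Set.univ) :
    Dtot A 𝓑 ≠ ⊤ ↔ ¬∃ a ∈ A, ∃ b ∈ Aᶜ, ∀ B ∈ 𝓑, a ∈ B → b ∈ B :=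
  finiteness_test_general 𝓑 A hA₁ hA₂
end

section
/- Let Γ be a nonempty finite set with |Γ| = k, let 𝓑 be a family of subsets of Γ with |𝓑| = m, and let s ∈ ℕ⁺. If 3 · s · ⌈log₂(m + s)⌉ < k, then there exists a set A ⊆ Γ such that D(A | 𝓑) ≥ s. -/
open Set Filter

/-!
A sequence generating `A` in at most `n` steps can be padded to exactly `n` steps, and it is then
determined by its program: for each step the operation and two operands, each a generator or an
earlier step. There are `(2 (m + n)²)ⁿ` such programs, so at most that many sets have complexity
at most `n`; for `n = s - 1` the hypothesis makes this fewer than the `2ᵏ` subsets of `Γ`.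
-/

section Counting

variable {Γ : Type*}

namespace StepOK

lemma extend {𝓑 : Set (Set Γ)} {t n : ℕ} {seq : Fin (t + 1) → Set Γ} {ops : Fin (t + 1) → Bool}
    (h : StepOK 𝓑 seq ops) (htn : t ≤ n) :
    ∃ (seq' : Fin (n + 1) → Set Γ) (ops' : Fin (n + 1) → Bool),
      StepOK 𝓑 seq' ops' ∧ seq' (Fin.last n) = seq (Fin.last t) := by
  let clamp : Fin (n + 1) → Fin (t + 1) := fun i => ⟨min i t, by omega⟩
  have clamp_castLE (j : Fin (t + 1)) : clamp (j.castLE (by omega)) = j :=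
    Fin.ext (by simp [clamp]; omega)
  have clamp_of_le {i : Fin (n + 1)} (hi : t ≤ i) : clamp i = Fin.last t :=
    Fin.ext (by simp [clamp, hi])
  refine ⟨seq ∘ clamp, ops ∘ clamp, fun i => ?_, congrArg seq (clamp_of_le (by simp [htn]))⟩
  rcases le_or_gt (i : ℕ) t with hi | hi
  · obtain ⟨X, Y, hX, hY, e⟩ := h (clamp i)
    have lift : ∀ Z, (Z ∈ 𝓑 ∨ ∃ j, j < clamp i ∧ Z = seq j) →
        Z ∈ 𝓑 ∨ ∃ j, j < i ∧ Z = (seq ∘ clamp) j := by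
      rintro Z (hZ | ⟨j, hj, rfl⟩)
      · exact .inl hZ
      · refine .inr ⟨j.castLE (by omega), ?_, by simp [clamp_castLE]⟩
        simp only [Fin.lt_def, clamp, Fin.val_castLE] at hj ⊢
        omega
    exact ⟨X, Y, lift X hX, lift Y hY, e⟩
  · have hlast : (⟨t, by omega⟩ : Fin (n + 1)) < i := hi
    have hval : (seq ∘ clamp) ⟨t, by omega⟩ = seq (Fin.last t) :=
      congrArg seq (clamp_of_le le_rfl)
    refine ⟨_, _, .inr ⟨_, hlast, hval.symm⟩, .inr ⟨_, hlast, hval.symm⟩, ?_⟩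
    simp only [Function.comp_apply, clamp_of_le hi.le]
    cases ops (Fin.last t) <;> simp

end StepOK

lemma one_le_Dtot (A : Set Γ) (𝓑 : Set (Set Γ)) : 1 ≤ Dtot A 𝓑 :=
  le_sInf fun _ ⟨t, _, _, _, _, ht⟩ => ht ▸ by exact_mod_cast t.succ_pos

lemma exists_stepOK_of_Dtot_le {A : Set Γ} {𝓑 : Set (Set Γ)} {n : ℕ} (h : Dtot A 𝓑 ≤ n) :
    ∃ (t : ℕ) (seq : Fin (t + 1) → Set Γ) (ops : Fin (t + 1) → Bool),
      StepOK 𝓑 seq ops ∧ seq (Fin.last t) = A ∧ t + 1 ≤ n := by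
  obtain ⟨_, ⟨t, seq, ops, hstep, hA, rfl⟩, hlt⟩ :=
    sInf_lt_iff.1 (h.trans_lt (ENat.natCast_lt_natCast.2 n.lt_succ_self))
  exact ⟨t, seq, ops, hstep, hA, Nat.lt_succ_iff.1 (ENat.natCast_lt_natCast.1 hlt)⟩

section Program

variable {𝓑 : Finset (Set Γ)} {n : ℕ}

abbrev Operand (𝓑 : Finset (Set Γ)) (n : ℕ) := 𝓑 ⊕ Fin n

namespace Operand

def eval (seq : Fin n → Set Γ) : Operand 𝓑 n → Set Γ := Sum.elim Subtype.val seq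

def Precedes (i : Fin n) : Operand 𝓑 n → Prop := Sum.elim (fun _ => True) (· < i)

lemma eval_congr {i : Fin n} {o : Operand 𝓑 n} (ho : o.Precedes i) {s₁ s₂ : Fin n → Set Γ}
    (h : ∀ j < i, s₁ j = s₂ j) : o.eval s₁ = o.eval s₂ := by
  cases o with
  | inl B => rfl
  | inr j => exact h j ho

lemma exists_of_mem_or {seq : Fin n → Set Γ} {i : Fin n} {X : Set Γ}
    (h : X ∈ (𝓑 : Set (Set Γ)) ∨ ∃ j, j < i ∧ X = seq j) :
    ∃ o : Operand 𝓑 n, o.Precedes i ∧ o.eval seq = X := by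
  rcases h with hB | ⟨j, hj, rfl⟩
  · exact ⟨.inl ⟨X, hB⟩, trivial, rfl⟩
  · exact ⟨.inr j, hj, rfl⟩

end Operand

/-- An instruction: intersection (`true`) or union (`false`) of two operands. -/
abbrev Instruction (𝓑 : Finset (Set Γ)) (n : ℕ) := Bool × Operand 𝓑 n × Operand 𝓑 n

def IsTrace (prog : Fin n → Instruction 𝓑 n) (seq : Fin n → Set Γ) : Prop :=
  ∀ i, (prog i).2.1.Precedes i ∧ (prog i).2.2.Precedes i ∧
    seq i = if (prog i).1 then (prog i).2.1.eval seq ∩ (prog i).2.2.eval seq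
      else (prog i).2.1.eval seq ∪ (prog i).2.2.eval seq

lemma IsTrace.unique {prog : Fin n → Instruction 𝓑 n} {s₁ s₂ : Fin n → Set Γ}
    (h₁ : IsTrace prog s₁) (h₂ : IsTrace prog s₂) : s₁ = s₂ := by
  funext i
  induction i using WellFoundedLT.induction with
  | _ i ih =>
    obtain ⟨hX, hY, e⟩ := h₁ i
    rw [e, (h₂ i).2.2, Operand.eval_congr hX ih, Operand.eval_congr hY ih]

lemma StepOK.exists_isTrace {seq : Fin n → Set Γ} {ops : Fin n → Bool}
    (h : StepOK (𝓑 : Set (Set Γ)) seq ops) :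
    ∃ prog : Fin n → Instruction 𝓑 n, IsTrace prog seq := by
  choose X Y hX hY hseq using h
  choose oX hoX hvX using fun i => Operand.exists_of_mem_or (hX i)
  choose oY hoY hvY using fun i => Operand.exists_of_mem_or (hY i)
  exact ⟨fun i => (ops i, oX i, oY i), fun i => ⟨hoX i, hoY i, by simp [hseq, hvX, hvY]⟩⟩

lemma exists_isTrace_of_Dtot_le {A : Set Γ} (h : Dtot A 𝓑 ≤ (n + 1 : ℕ)) :
    ∃ (prog : Fin (n + 1) → Instruction 𝓑 (n + 1)) (seq : Fin (n + 1) → Set Γ),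
      IsTrace prog seq ∧ seq (Fin.last n) = A := by
  obtain ⟨t, seq, ops, hstep, rfl, ht⟩ := exists_stepOK_of_Dtot_le h
  obtain ⟨seq', ops', hstep', hlast⟩ := hstep.extend (n := n) (by omega)
  obtain ⟨prog, hprog⟩ := hstep'.exists_isTrace
  exact ⟨prog, seq', hprog, hlast⟩

lemma card_Dtot_le_le (𝓑 : Finset (Set Γ)) (n : ℕ) :
    Nat.card {A : Set Γ // Dtot A 𝓑 ≤ n} ≤ (2 * (𝓑.card + n) ^ 2) ^ n := by
  cases n with
  | zero =>
    have : IsEmpty {A : Set Γ // Dtot A 𝓑 ≤ (0 : ℕ)} :=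
      ⟨fun A => by simpa using (one_le_Dtot A.1 _).trans A.2⟩
    rw [Nat.card_of_isEmpty]
    exact Nat.zero_le _
  | succ n =>
    choose prog seq htrace hlast using
      fun A : {A : Set Γ // Dtot A 𝓑 ≤ (n + 1 : ℕ)} => exists_isTrace_of_Dtot_le A.2
    have hinj : Function.Injective prog := fun A B hAB =>
      Subtype.ext (by rw [← hlast A, ← hlast B, (htrace A).unique (hAB ▸ htrace B)])
    calc Nat.card _ ≤ Nat.card (Fin (n + 1) → Instruction 𝓑 (n + 1)) :=
          Nat.card_le_card_of_injective prog hinj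
      _ = _ := by simp; ring

end Program

lemma two_mul_sq_pow_lt_two_pow {m n k : ℕ} (h : 3 * (n + 1) * Nat.clog 2 (m + (n + 1)) < k) :
    (2 * (m + n) ^ 2) ^ n < 2 ^ k := by
  rcases Nat.eq_zero_or_pos n with rfl | hn
  · simpa using Nat.one_lt_two_pow (by omega : k ≠ 0)
  set L := Nat.clog 2 (m + (n + 1))
  have hL : 1 ≤ L := Nat.clog_pos one_lt_two (by omega)
  have hbase : m + n ≤ 2 ^ L := (Nat.le_succ _).trans (Nat.le_pow_clog one_lt_two _)
  calc (2 * (m + n) ^ 2) ^ n ≤ (2 * (2 ^ L) ^ 2) ^ n := by gcongr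
    _ = 2 ^ ((2 * L + 1) * n) := by ring
    _ < 2 ^ k := Nat.pow_lt_pow_right one_lt_two (by nlinarith)

end Counting

theorem complex_sets_exist_general {Γ : Type*} [Fintype Γ]
    (𝓑 : Finset (Set Γ)) (s : ℕ) (hs : 0 < s)
    (h : 3 * s * Nat.clog 2 (𝓑.card + s) < Fintype.card Γ) :
    ∃ A : Set Γ, (s : ℕ∞) ≤ Dtot A ↑𝓑 := by
  obtain ⟨n, rfl⟩ := Nat.exists_eq_add_one_of_ne_zero hs.ne'
  by_contra! hlow
  have hall : Nat.card {A : Set Γ // Dtot A 𝓑 ≤ n} = 2 ^ Fintype.card Γ := by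
    have hle (A : Set Γ) : Dtot A 𝓑 ≤ n := ENat.lt_natCast_add_one_iff.1 (by simpa using hlow A)
    rw [Nat.card_congr (Equiv.subtypeUnivEquiv hle), Nat.card_eq_fintype_card, Fintype.card_set]
  exact (card_Dtot_le_le 𝓑 n).not_gt (hall ▸ two_mul_sq_pow_lt_two_pow h)

/-- Complex sets: if `|Γ| = k`, `|𝓑| = m`, `s ≥ 1`, and
`3·s·⌈log₂(m + s)⌉ < k`, then there exists `A ⊆ Γ` with `D(A | 𝓑) ≥ s`. -/
theorem complex_sets_exist {Γ : Type*} [Fintype Γ] [Nonempty Γ]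
    (𝓑 : Finset (Set Γ)) (s : ℕ) (hs : 0 < s)
    (h : 3 * s * Nat.clog 2 (𝓑.card + s) < Fintype.card Γ) :
    ∃ A : Set Γ, (s : ℕ∞) ≤ Dtot A ↑𝓑 :=
  complex_sets_exist_general 𝓑 s hs h
end

section
/- There exists an absolute constant c > 0 such that for every nonempty finite ground set Γ, every nonempty family 𝓑 of subsets of Γ, and every A ⊆ Γ with finite intersection complexity D_∩(A | 𝓑) = t, one has D_∪(A | 𝓑) ≤ D(A | 𝓑) ≤ c · (t + |𝓑|)³. -/
open Set Filter

/-! Every entry of a generating sequence is a finite union of generators and of outputs of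
earlier intersection steps, and there are at most `|𝓑| + t` such sets. Replaying only the
intersection steps, in order, each of their two operands is rebuilt from already available
sets by at most `|𝓑| + t` unions, so each intersection step costs at most `2(|𝓑| + t) + 1`
steps; at most `|𝓑| + t` further unions produce `A`, and one more step puts it last. Hence
`D(A | 𝓑) ≤ t (2(|𝓑| + t) + 1) + |𝓑| + t + 1 ≤ 5 (t + |𝓑|)³`. -/

section Regeneration

variable {Γ : Type*} {𝓑 : Set (Set Γ)}

def Generable (𝓑 : Set (Set Γ)) (n : ℕ) (𝒮 : Set (Set Γ)) : Prop :=
  ∃ k ≤ n, ∃ (seq : Fin k → Set Γ) (ops : Fin k → Bool), StepOK 𝓑 seq ops ∧ 𝒮 ⊆ 𝓑 ∪ range seq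

lemma generable_zero : Generable 𝓑 0 𝓑 :=
  ⟨0, le_rfl, Fin.elim0, Fin.elim0, fun i => i.elim0, subset_union_left⟩

lemma Generable.mono {n m : ℕ} {𝒮 𝒯 : Set (Set Γ)} (h : Generable 𝓑 n 𝒮) (hnm : n ≤ m)
    (h𝒯 : 𝒯 ⊆ 𝒮) : Generable 𝓑 m 𝒯 := by
  obtain ⟨k, hk, seq, ops, hseq, h𝒮⟩ := h
  exact ⟨k, hk.trans hnm, seq, ops, hseq, h𝒯.trans h𝒮⟩

lemma StepOK.snoc {k : ℕ} {seq : Fin k → Set Γ} {ops : Fin k → Bool} (h : StepOK 𝓑 seq ops)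
    {X Y : Set Γ} (hX : X ∈ 𝓑 ∪ range seq) (hY : Y ∈ 𝓑 ∪ range seq) (b : Bool) :
    StepOK 𝓑 (Fin.snoc seq (if b = true then X ∩ Y else X ∪ Y) : Fin (k + 1) → Set Γ)
      (Fin.snoc ops b : Fin (k + 1) → Bool) := by
  intro i
  induction i using Fin.lastCases with
  | last =>
    have operand : ∀ {Z}, Z ∈ 𝓑 ∪ range seq → Z ∈ 𝓑 ∨ ∃ j, j < Fin.last k ∧
        Z = (Fin.snoc seq (if b = true then X ∩ Y else X ∪ Y) : Fin (k + 1) → Set Γ) j := by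
      rintro Z (hZ | ⟨j, rfl⟩)
      · exact Or.inl hZ
      · exact Or.inr ⟨j.castSucc, Fin.castSucc_lt_last j, by simp⟩
    exact ⟨X, Y, operand hX, operand hY, by simp⟩
  | cast i =>
    obtain ⟨X', Y', hX', hY', hi⟩ := h i
    have operand : ∀ {Z}, (Z ∈ 𝓑 ∨ ∃ j < i, Z = seq j) → Z ∈ 𝓑 ∨ ∃ j, j < i.castSucc ∧
        Z = (Fin.snoc seq (if b = true then X ∩ Y else X ∪ Y) : Fin (k + 1) → Set Γ) j := by
      rintro Z (hZ | ⟨j, hj, rfl⟩)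
      · exact Or.inl hZ
      · exact Or.inr ⟨j.castSucc, Fin.castSucc_lt_castSucc_iff.2 hj, by simp⟩
    exact ⟨X', Y', operand hX', operand hY', by simpa using hi⟩

variable {n : ℕ} {𝒮 : Set (Set Γ)} {X Y : Set Γ}

lemma Generable.insert_op (h : Generable 𝓑 n 𝒮) (hX : X ∈ 𝒮) (hY : Y ∈ 𝒮) (b : Bool) :
    Generable 𝓑 (n + 1) (insert (if b = true then X ∩ Y else X ∪ Y) 𝒮) := by
  obtain ⟨k, hk, seq, ops, hseq, h𝒮⟩ := h
  refine ⟨k + 1, by omega, _, _, hseq.snoc (h𝒮 hX) (h𝒮 hY) b,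
    insert_subset_iff.2 ⟨Or.inr ⟨Fin.last k, by simp⟩, h𝒮.trans ?_⟩⟩
  rintro Z (hZ | ⟨j, rfl⟩)
  · exact Or.inl hZ
  · exact Or.inr ⟨j.castSucc, by simp⟩

lemma Generable.insert_inter (h : Generable 𝓑 n 𝒮) (hX : X ∈ 𝒮) (hY : Y ∈ 𝒮) :
    Generable 𝓑 (n + 1) (insert (X ∩ Y) 𝒮) := by
  simpa using h.insert_op hX hY true

lemma Generable.insert_union (h : Generable 𝓑 n 𝒮) (hX : X ∈ 𝒮) (hY : Y ∈ 𝒮) :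
    Generable 𝓑 (n + 1) (insert (X ∪ Y) 𝒮) := by
  simpa using h.insert_op hX hY false

lemma Generable.insert_sup' (h : Generable 𝓑 n 𝒮) {T : Finset (Set Γ)} (hT : T.Nonempty)
    (hT𝒮 : ↑T ⊆ 𝒮) : Generable 𝓑 (n + T.card) (insert (T.sup' hT id) 𝒮) := by
  induction hT using Finset.Nonempty.cons_induction with
  | singleton X =>
    have hX : X ∈ 𝒮 := hT𝒮 (by simp)
    simpa [hX] using h.insert_union hX hX
  | cons X T hXT hT ih =>
    rw [Finset.coe_cons, insert_subset_iff] at hT𝒮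
    refine ((ih hT𝒮.2).insert_union (mem_insert_of_mem _ hT𝒮.1) (mem_insert _ _)).mono
      (by rw [Finset.card_cons]; omega) ?_
    rw [Finset.sup'_cons]
    exact insert_subset_insert (subset_insert _ _)

lemma Generable.insert_of_mem_supClosure (h : Generable 𝓑 n 𝒮) {𝒢 : Finset (Set Γ)}
    (h𝒢 : ↑𝒢 ⊆ 𝒮) (hX : X ∈ supClosure (𝒢 : Set (Set Γ))) :
    Generable 𝓑 (n + 𝒢.card) (insert X 𝒮) := by
  obtain ⟨T, hT, hT𝒢, rfl⟩ := hX
  exact (h.insert_sup' hT (hT𝒢.trans h𝒢)).mono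
    (Nat.add_le_add_left (Finset.card_le_card (Finset.coe_subset.1 hT𝒢)) n) le_rfl

lemma Generable.dtot_le {A : Set Γ} (h : Generable 𝓑 n 𝒮) (hA : A ∈ 𝒮) :
    Dtot A 𝓑 ≤ n + 1 := by
  obtain ⟨k, hk, seq, ops, hseq, h𝒮⟩ := h
  have hD : Dtot A 𝓑 ≤ (k + 1 : ℕ) :=
    sInf_le ⟨k, _, _, hseq.snoc (h𝒮 hA) (h𝒮 hA) false, by simp, rfl⟩
  exact hD.trans (by exact_mod_cast Nat.succ_le_succ hk)

end Regeneration

section Decomposition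

variable {Γ : Type*} {n : ℕ} {seq : Fin n → Set Γ} {ops : Fin n → Bool}

def interBefore (ops : Fin n → Bool) (k : ℕ) : Finset (Fin n) :=
  Finset.univ.filter fun j => (j : ℕ) < k ∧ ops j = true

lemma card_interBefore_le (k : ℕ) : (interBefore ops k).card ≤ interCount ops :=
  Finset.card_le_card fun j hj => by
    simp only [interBefore, Finset.mem_filter] at hj ⊢
    exact ⟨hj.1, hj.2.2⟩

lemma interBefore_mono : Monotone (interBefore ops) := fun k l hkl j => by
  simp only [interBefore, Finset.mem_filter, Finset.mem_univ, true_and]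
  exact fun hj => ⟨by omega, hj.2⟩

lemma interBefore_succ_of_inter {i : Fin n} (hi : ops i = true) :
    interBefore ops (i + 1) = insert i (interBefore ops i) := by
  ext j
  simp only [interBefore, Finset.mem_insert, Finset.mem_filter, Finset.mem_univ, true_and,
    Fin.ext_iff]
  constructor
  · rintro ⟨hj, hop⟩
    obtain hj | hj := Nat.lt_succ_iff_lt_or_eq.1 hj
    exacts [Or.inr ⟨hj, hop⟩, Or.inl hj]
  · rintro (hj | ⟨hj, hop⟩)
    exacts [⟨by omega, Fin.ext hj ▸ hi⟩, ⟨by omega, hop⟩]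

lemma interBefore_succ_of_not_exists {k : ℕ} (hk : ¬∃ i : Fin n, (i : ℕ) = k ∧ ops i = true) :
    interBefore ops (k + 1) = interBefore ops k := by
  ext j
  simp only [interBefore, Finset.mem_filter, Finset.mem_univ, true_and]
  constructor
  · rintro ⟨hj, hop⟩
    obtain hj | hj := Nat.lt_succ_iff_lt_or_eq.1 hj
    exacts [⟨hj, hop⟩, absurd ⟨j, hj, hop⟩ hk]
  · exact fun hj => ⟨by omega, hj.2⟩

lemma StepOK.mem_supClosure {𝓑 : Set (Set Γ)} (h : StepOK 𝓑 seq ops) {k : ℕ} {X : Set Γ}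
    (hX : X ∈ 𝓑 ∨ ∃ j : Fin n, (j : ℕ) < k ∧ X = seq j) :
    X ∈ supClosure (𝓑 ∪ seq '' ↑(interBefore ops k)) := by
  induction k generalizing X with
  | zero =>
    obtain hX | ⟨j, hj, -⟩ := hX
    · exact subset_supClosure (Or.inl hX)
    · omega
  | succ k ih =>
    have hmono : supClosure (𝓑 ∪ seq '' ↑(interBefore ops k)) ⊆
        supClosure (𝓑 ∪ seq '' ↑(interBefore ops (k + 1))) :=
      supClosure_mono <| union_subset_union_right _ <| image_mono <|
        Finset.coe_subset.2 <| interBefore_mono k.le_succ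
    obtain hX | ⟨j, hj, rfl⟩ := hX
    · exact subset_supClosure (Or.inl hX)
    obtain hj | rfl := Nat.lt_succ_iff_lt_or_eq.1 hj
    · exact hmono (ih (Or.inr ⟨j, hj, rfl⟩))
    by_cases hop : ops j = true
    · exact subset_supClosure (Or.inr ⟨j, by simp [interBefore, hop], rfl⟩)
    obtain ⟨X, Y, hX, hY, hXY⟩ := h j
    rw [hXY, if_neg hop]
    exact hmono (supClosed_supClosure (ih hX) (ih hY))

open scoped Classical in
lemma StepOK.generable_insert_operand {𝓑 : Finset (Set Γ)} (h : StepOK ↑𝓑 seq ops) {m k : ℕ}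
    {𝒮 : Set (Set Γ)} {X : Set Γ} (hgen : Generable ↑𝓑 m 𝒮)
    (h𝒮 : ↑𝓑 ∪ seq '' ↑(interBefore ops k) ⊆ 𝒮)
    (hX : X ∈ (𝓑 : Set (Set Γ)) ∨ ∃ j : Fin n, (j : ℕ) < k ∧ X = seq j) :
    Generable ↑𝓑 (m + (𝓑.card + interCount ops)) (insert X 𝒮) := by
  have hcl := h.mem_supClosure hX
  rw [← Finset.coe_image, ← Finset.coe_union] at hcl h𝒮
  refine (hgen.insert_of_mem_supClosure h𝒮 hcl).mono ?_ le_rfl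
  gcongr
  exact (Finset.card_union_le _ _).trans
    (by gcongr; exact Finset.card_image_le.trans (card_interBefore_le k))

open scoped Classical in
lemma StepOK.generable_interBefore {𝓑 : Finset (Set Γ)} (h : StepOK ↑𝓑 seq ops) (k : ℕ) :
    Generable ↑𝓑 ((interBefore ops k).card * (2 * (𝓑.card + interCount ops) + 1))
      (↑𝓑 ∪ seq '' ↑(interBefore ops k)) := by
  induction k with
  | zero => simpa [interBefore] using generable_zero
  | succ k ih =>
    by_cases hk : ∃ i : Fin n, (i : ℕ) = k ∧ ops i = true
    · obtain ⟨i, rfl, hi⟩ := hk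
      obtain ⟨X, Y, hX, hY, hXY⟩ := h i
      rw [if_pos hi] at hXY
      have hXgen := h.generable_insert_operand ih subset_rfl hX
      have hYgen := h.generable_insert_operand hXgen (subset_insert _ _) hY
      refine (hYgen.insert_inter (mem_insert_of_mem _ (mem_insert _ _)) (mem_insert _ _)).mono
        ?_ ?_ <;> rw [interBefore_succ_of_inter hi]
      · rw [Finset.card_insert_of_notMem (by simp [interBefore]), add_one_mul]
        omega
      · rw [Finset.coe_insert, image_insert_eq, ← hXY]
        intro Z
        simp only [mem_union, mem_insert_iff]
        tauto
    · rwa [interBefore_succ_of_not_exists hk]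

open scoped Classical in
lemma StepOK.dtot_le {𝓑 : Finset (Set Γ)} (h : StepOK ↑𝓑 seq ops) (i : Fin n) :
    Dtot (seq i) ↑𝓑 ≤ ((interCount ops * (2 * (𝓑.card + interCount ops) + 1) +
      (𝓑.card + interCount ops) + 1 : ℕ) : ℕ∞) := by
  have hgen := (h.generable_interBefore n).mono
    (Nat.mul_le_mul_right _ (card_interBefore_le n)) le_rfl
  exact_mod_cast (h.generable_insert_operand hgen subset_rfl (Or.inr ⟨i, i.isLt, rfl⟩)).dtot_le
    (mem_insert _ _)

end Decomposition

section Complexity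

variable {Γ : Type*} {𝓑 : Set (Set Γ)} {A : Set Γ}

lemma dcup_le_dtot : Dcup A 𝓑 ≤ Dtot A 𝓑 := by
  refine le_sInf ?_
  rintro _ ⟨t, seq, ops, hseq, hA, rfl⟩
  have hD : Dcup A 𝓑 ≤ (unionCount ops : ℕ) := sInf_le ⟨t, seq, ops, hseq, hA, rfl⟩
  refine hD.trans ?_
  have hcount : unionCount ops ≤ t + 1 :=
    (Finset.card_filter_le _ _).trans (Finset.card_univ.trans (Fintype.card_fin _)).le
  exact_mod_cast hcount

lemma exists_stepOK_of_dcap_eq {t : ℕ} (h : Dcap A 𝓑 = t) :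
    ∃ (n : ℕ) (seq : Fin (n + 1) → Set Γ) (ops : Fin (n + 1) → Bool),
      StepOK 𝓑 seq ops ∧ seq (Fin.last n) = A ∧ interCount ops = t := by
  rw [Dcap] at h
  have hne : Set.Nonempty {m : ℕ∞ | ∃ (n : ℕ) (seq : Fin (n + 1) → Set Γ)
      (ops : Fin (n + 1) → Bool), StepOK 𝓑 seq ops ∧ seq (Fin.last n) = A ∧
        m = ((interCount ops : ℕ) : ℕ∞)} := by
    by_contra hempty
    rw [not_nonempty_iff_eq_empty.1 hempty, sInf_empty] at h
    exact ENat.top_ne_natCast t h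
  obtain ⟨n, seq, ops, hseq, hA, hcount⟩ := csInf_mem hne
  exact ⟨n, seq, ops, hseq, hA, by exact_mod_cast hcount.symm.trans h⟩

end Complexity

/-- Intersection complexity versus discrete complexity: there is
an absolute constant `c > 0` such that for every nonempty finite `Γ`, nonempty
family `𝓑`, and `A ⊆ Γ` with finite intersection complexity `D_∩(A | 𝓑) = t`,
`D_∪(A | 𝓑) ≤ D(A | 𝓑) ≤ c·(t + |𝓑|)³`. -/
theorem inter_vs_total_complexity :
    ∃ c : ℕ, 0 < c ∧ ∀ (Γ : Type) [Fintype Γ] [Nonempty Γ],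
      ∀ (𝓑 : Finset (Set Γ)), 𝓑.Nonempty → ∀ (A : Set Γ) (t : ℕ),
      Dcap A ↑𝓑 = (t : ℕ∞) →
      Dcup A ↑𝓑 ≤ Dtot A ↑𝓑 ∧ Dtot A ↑𝓑 ≤ ((c * (t + 𝓑.card) ^ 3 : ℕ) : ℕ∞) := by
  refine ⟨5, by norm_num, fun Γ _ _ 𝓑 h𝓑 A t ht => ⟨dcup_le_dtot, ?_⟩⟩
  obtain ⟨n, seq, ops, hseq, rfl, rfl⟩ := exists_stepOK_of_dcap_eq ht
  refine (hseq.dtot_le (Fin.last n)).trans (Nat.cast_le.2 ?_)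
  have hs : 1 ≤ interCount ops + 𝓑.card := le_add_left (Finset.card_pos.2 h𝓑)
  nlinarith [Nat.mul_le_mul hs hs, Nat.mul_le_mul (Nat.mul_le_mul hs hs) hs]
end

section
/- Let N = 2^n. For any non-trivial graph G ⊆ [N] × [N], ρ(G, 𝓖_{N,N}) ≤ D_∩(φ(G) | 𝓑_{2n}); that is, the cover complexity of G with respect to the graph-complexity generators is at most the AND (intersection) complexity of the associated Boolean function f_G. -/
open Set Filter

/-!
If `A` is generated from `𝓑` with intersection steps `Xᵢ ∩ Yᵢ`, the pairs
`(Xᵢ ∩ Aᶜ, Yᵢ ∩ Aᶜ)` cover `A`: along the sequence, a semi-filter over `Aᶜ` that is above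
`a ∈ A` and preserves these pairs contains `S ∩ Aᶜ` for every step `S ∋ a` (unions by upward
closure, intersections by preservation), and at the last step `S = A` this is `∅`.
For graphs, pull the circuit back along the injection `φ`: the first `n` bits of `φ(u, v)`
depend only on `u` and the last `n` only on `v`, so every pulled-back literal containing
`(u, v)` contains `R_u` or `C_v`, and a semi-filter above `(u, v)` for `𝓖` is above it for
the pulled-back literals.
-/

section CoverComplexity

variable {Γ α : Type*}

lemma Dcap_preimage_le (f : α → Γ) (S : Set Γ) (𝓑 : Set (Set Γ)) :
    Dcap (f ⁻¹' S) (preimage f '' 𝓑) ≤ Dcap S 𝓑 := by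
  refine le_sInf ?_
  rintro m ⟨t, seq, ops, hstep, hlast, rfl⟩
  refine sInf_le ⟨t, fun i => f ⁻¹' seq i, ops, fun i => ?_, congrArg (preimage f) hlast, rfl⟩
  obtain ⟨X, Y, hX, hY, hseq⟩ := hstep i
  have pull : ∀ Z : Set Γ, (Z ∈ 𝓑 ∨ ∃ j < i, Z = seq j) →
      f ⁻¹' Z ∈ preimage f '' 𝓑 ∨ ∃ j < i, f ⁻¹' Z = f ⁻¹' seq j := by
    rintro Z (hZ | ⟨j, hj, rfl⟩)
    exacts [Or.inl ⟨Z, hZ, rfl⟩, Or.inr ⟨j, hj, rfl⟩]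
  refine ⟨f ⁻¹' X, f ⁻¹' Y, pull X hX, pull Y hY, ?_⟩
  change f ⁻¹' seq i = _
  rw [hseq]
  split_ifs <;> rfl

lemma Above.of_refines {𝓑₁ 𝓑₂ : Set (Set Γ)} {U : Set Γ} {F : Set (Set Γ)} {a : Γ}
    (hF : SemiFilter U F) (h : ∀ B ∈ 𝓑₂, a ∈ B → ∃ B' ∈ 𝓑₁, a ∈ B' ∧ B' ⊆ B)
    (ha : Above 𝓑₁ U F a) : Above 𝓑₂ U F a := by
  intro B hB haB
  obtain ⟨B', hB', haB', hB'B⟩ := h B hB haB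
  exact hF.2.2.1 _ (ha B' hB' haB') _ (inter_subset_inter_left U hB'B) inter_subset_right

lemma rho_le_rho_of_refines (A : Set Γ) {𝓑₁ 𝓑₂ : Set (Set Γ)}
    (h : ∀ a ∈ A, ∀ B ∈ 𝓑₂, a ∈ B → ∃ B' ∈ 𝓑₁, a ∈ B' ∧ B' ⊆ B) :
    rho A 𝓑₁ ≤ rho A 𝓑₂ := by
  refine le_sInf ?_
  rintro m ⟨Λ, ⟨hsub, hcov⟩, rfl⟩
  refine sInf_le ⟨Λ, ⟨hsub, ?_⟩, rfl⟩
  rintro ⟨F, a, hF, haA, ha, hpres⟩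
  exact hcov ⟨F, a, hF, haA, ha.of_refines hF (h a haA), hpres⟩

lemma inter_mem_of_mem_seq {𝓑 : Set (Set Γ)} {t : ℕ} {seq X Y : Fin t → Set Γ}
    {ops : Fin t → Bool} (hX : ∀ i, X i ∈ 𝓑 ∨ ∃ j < i, X i = seq j)
    (hY : ∀ i, Y i ∈ 𝓑 ∨ ∃ j < i, Y i = seq j)
    (hseq : ∀ i, seq i = if ops i = true then X i ∩ Y i else X i ∪ Y i)
    {U : Set Γ} {F : Set (Set Γ)} {a : Γ} (hF : SemiFilter U F) (ha : Above 𝓑 U F a)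
    (hpres : ∀ i, ops i = true → PreservesPair F (X i ∩ U, Y i ∩ U))
    (i : Fin t) (hai : a ∈ seq i) : seq i ∩ U ∈ F := by
  induction i using WellFoundedLT.induction with
  | _ i ih =>
  have arg : ∀ Z : Set Γ, (Z ∈ 𝓑 ∨ ∃ j < i, Z = seq j) → a ∈ Z → Z ∩ U ∈ F := by
    rintro Z (hZ | ⟨j, hj, rfl⟩) haZ
    exacts [ha Z hZ haZ, ih j hj haZ]
  have up : ∀ Z W : Set Γ, Z ⊆ W → Z ∩ U ∈ F → W ∩ U ∈ F := fun Z W hZW hZ =>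
    hF.2.2.1 _ hZ _ (inter_subset_inter_left U hZW) inter_subset_right
  rw [hseq i] at hai ⊢
  split_ifs at hai ⊢ with hop
  · rw [inter_inter_distrib_right]
    exact hpres i hop (arg _ (hX i) hai.1) (arg _ (hY i) hai.2)
  · rcases hai with hai | hai
    · exact up _ _ subset_union_left (arg _ (hX i) hai)
    · exact up _ _ subset_union_right (arg _ (hY i) hai)

theorem rho_le_Dcap (A : Set Γ) (𝓑 : Set (Set Γ)) : rho A 𝓑 ≤ Dcap A 𝓑 := by
  classical
  refine le_sInf ?_
  rintro m ⟨t, seq, ops, hstep, hlast, rfl⟩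
  choose X Y hX hY hseq using hstep
  let Λ := {i | ops i = true}.toFinset.image fun i => (X i ∩ Aᶜ, Y i ∩ Aᶜ)
  have hcard : (Λ.card : ℕ∞) ≤ interCount ops := by
    exact_mod_cast (Finset.card_image_le.trans_eq (by simp [interCount]))
  refine le_trans (sInf_le ⟨Λ, ⟨?_, ?_⟩, rfl⟩) hcard
  · simp only [Λ, Finset.mem_image, Set.mem_toFinset]
    rintro _ ⟨i, -, rfl⟩
    exact ⟨inter_subset_right, inter_subset_right⟩
  · rintro ⟨F, a, hF, haA, ha, hpres⟩
    have hpres' : ∀ i, ops i = true → PreservesPair F (X i ∩ Aᶜ, Y i ∩ Aᶜ) := fun i hop =>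
      hpres _ (Finset.mem_image_of_mem _ (Set.mem_toFinset.2 hop))
    have hlastF := inter_mem_of_mem_seq hX hY hseq hF ha hpres' (Fin.last t) (hlast ▸ haA)
    rw [hlast, inter_compl_self] at hlastF
    exact hF.2.2.2 hlastF

end CoverComplexity

lemma binMap_injective (n : ℕ) : Function.Injective (binMap n) := by
  intro k k' h
  refine Fin.ext (Nat.eq_of_testBit_eq fun i => ?_)
  by_cases hi : i < n
  · simpa [binMap, show n - 1 - (n - 1 - i) = i by omega] using
      congrFun h ⟨n - 1 - i, by omega⟩
  · have hle : 2 ^ n ≤ 2 ^ i := Nat.pow_le_pow_right two_pos (by omega)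
    rw [Nat.testBit_eq_false_of_lt (k.isLt.trans_le hle),
      Nat.testBit_eq_false_of_lt (k'.isLt.trans_le hle)]

lemma phi_injective (n : ℕ) : Function.Injective (phi n) := by
  intro p q h
  have h1 : binMap n p.1 = binMap n q.1 := funext fun j => by
    simpa [phi] using congrFun h ⟨j, by omega⟩
  have h2 : binMap n p.2 = binMap n q.2 := funext fun j => by
    simpa [phi] using congrFun h ⟨n + j, by omega⟩
  exact Prod.ext (binMap_injective n h1) (binMap_injective n h2)

lemma phi_apply_eq_of_fst_eq (n : ℕ) {p q : Fin (2 ^ n) × Fin (2 ^ n)} (h : p.1 = q.1)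
    {j : Fin (2 * n)} (hj : (j : ℕ) < n) : phi n p j = phi n q j := by
  simp only [phi, dif_pos hj, h]

lemma phi_apply_eq_of_snd_eq (n : ℕ) {p q : Fin (2 ^ n) × Fin (2 ^ n)} (h : p.2 = q.2)
    {j : Fin (2 * n)} (hj : ¬(j : ℕ) < n) : phi n p j = phi n q j := by
  simp only [phi, dif_neg hj, h]

lemma graphGens_refines_preimage_cubeGens (n : ℕ) (p : Fin (2 ^ n) × Fin (2 ^ n))
    (B : Set (Fin (2 ^ n) × Fin (2 ^ n))) (hB : B ∈ preimage (phi n) '' cubeGens (2 * n))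
    (hp : p ∈ B) : ∃ B' ∈ graphGens (2 ^ n) (2 ^ n), p ∈ B' ∧ B' ⊆ B := by
  obtain ⟨_, ⟨j, hS | hS⟩, rfl⟩ := hB <;> subst hS <;>
  by_cases hj : (j : ℕ) < n
  all_goals first
    | refine ⟨rowSet _ _ p.1, Or.inl ⟨p.1, rfl⟩, rfl, fun q hq => ?_⟩
      simpa [phi_apply_eq_of_fst_eq n hq hj] using hp
    | refine ⟨colSet _ _ p.2, Or.inr ⟨p.2, rfl⟩, rfl, fun q hq => ?_⟩
      simpa [phi_apply_eq_of_snd_eq n hq hj] using hp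

theorem graph_cover_le_circuit_inter_general (n : ℕ) (G : Set (Fin (2 ^ n) × Fin (2 ^ n))) :
    rho G (graphGens (2 ^ n) (2 ^ n)) ≤ Dcap (phi n '' G) (cubeGens (2 * n)) :=
  calc rho G (graphGens (2 ^ n) (2 ^ n))
      ≤ rho G (preimage (phi n) '' cubeGens (2 * n)) :=
        rho_le_rho_of_refines G fun p _ => graphGens_refines_preimage_cubeGens n p
    _ ≤ Dcap G (preimage (phi n) '' cubeGens (2 * n)) := rho_le_Dcap _ _
    _ = Dcap (phi n ⁻¹' (phi n '' G)) (preimage (phi n) '' cubeGens (2 * n)) := by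
        rw [preimage_image_eq G (phi_injective n)]
    _ ≤ Dcap (phi n '' G) (cubeGens (2 * n)) := Dcap_preimage_le _ _ _

/-- Reducing circuit lower bounds to two-dimensional cover
problems: for `N = 2^n` and any non-trivial graph `G ⊆ [N] × [N]`,
`ρ(G, 𝓖_{N,N}) ≤ D_∩(φ(G) | 𝓑_{2n})`. -/
theorem graph_cover_le_circuit_inter (n : ℕ) (G : Set (Fin (2 ^ n) × Fin (2 ^ n)))
    (hG₁ : G ≠ ∅) (hG₂ : G ≠ Set.univ) :
    rho G (graphGens (2 ^ n) (2 ^ n)) ≤ Dcap (phi n '' G) (cubeGens (2 * n)) :=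
  graph_cover_le_circuit_inter_general n G
end
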